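/- Let X be a chain and let α be an orientation-preserving partial transformation of X with ideal Y. If α(Y) ∩ α(Dom(α)\Y) is nonempty, then α(Y) ∩ α(Dom(α)\Y) = {m} for some m ∈ X; moreover, in this case α(Y) has a minimum element, α(Dom(α)\Y) has a maximum element, and both of these elements equal m. -/
import Mathlib


variable {X : Type*}

/-- The partial transformation `f` is order-preserving on the subset `A` of its domain. -/
def IsOrdOn [LinearOrder X] (f : X →. X) (A : Set X) : Prop :=
  ∀ ⦃x y u v : X⦄, x ∈ A → y ∈ A → x ≤ y → u ∈ f x → v ∈ f y → u ≤ v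

/-- `Y` is an ideal of the partial transformation `f`: a nonempty subset of the domain such
that `f` is order-preserving on `Y` and on `Dom f \ Y`, and every element of `Y` is below every
element of `Dom f \ Y` while its image is above. -/
def IsIdeal [LinearOrder X] (f : X →. X) (Y : Set X) : Prop :=
  Y.Nonempty ∧ Y ⊆ f.Dom ∧ IsOrdOn f Y ∧ IsOrdOn f (f.Dom \ Y) ∧
    ∀ ⦃a b u v : X⦄, a ∈ Y → b ∈ f.Dom \ Y → u ∈ f a → v ∈ f b → a ≤ b ∧ v ≤ u

/-- `f` is an orientation-preserving partial transformation: it is the empty transformation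
or it admits an ideal. -/
def IsOP [LinearOrder X] (f : X →. X) : Prop :=
  f.Dom = ∅ ∨ ∃ Y : Set X, IsIdeal f Y

/-- If `α` is an orientation-preserving partial transformation with ideal `Y` and
`α(Y) ∩ α(Dom α \ Y)` is nonempty, then this intersection is a singleton `{m}`, `m` is the
minimum of `α(Y)` and the maximum of `α(Dom α \ Y)`. -/
theorem stmt3 (X : Type*) [LinearOrder X] (α : X →. X) (Y : Set X) (hY : IsIdeal α Y)
    (hne : (α.image Y ∩ α.image (α.Dom \ Y)).Nonempty) :
    ∃ m : X, α.image Y ∩ α.image (α.Dom \ Y) = {m} ∧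
      IsLeast (α.image Y) m ∧ IsGreatest (α.image (α.Dom \ Y)) m := by
  obtain ⟨m, hmY, hmD⟩ := hne
  obtain ⟨-, -, -, -, h5⟩ := hY
  -- key: any element of α(Dom\Y) ≤ any element of α(Y)
  have key : ∀ u ∈ α.image Y, ∀ v ∈ α.image (α.Dom \ Y), v ≤ u := by
    intro u hu v hv
    rw [PFun.mem_image] at hu hv
    obtain ⟨a, ha, hua⟩ := hu
    obtain ⟨b, hb, hvb⟩ := hv
    exact (h5 ha hb hua hvb).2
  refine ⟨m, ?_, ⟨hmY, fun u hu => key u hu m hmD⟩, ⟨hmD, fun v hv => key m hmY v hv⟩⟩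
  ext x
  simp only [Set.mem_inter_iff, Set.mem_singleton_iff]
  constructor
  · rintro ⟨hxY, hxD⟩
    exact le_antisymm (key m hmY x hxD) (key x hxY m hmD)
  · rintro rfl; exact ⟨hmY, hmD⟩
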